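/- arXiv:2503.10704 — 3 statements merged into one kernel-verified Lean document; each statement's English description precedes it below -/
import Mathlib

section
/- For every s ∈ [0,1] and every N ∈ ℕ, inf_{P̂} sup_{P ∈ S(s)} P( KL(P ‖ P̂(D_N(P))) ≥ s²/2 ) ≥ 1/2, where the infimum is taken over all estimators P̂, i.e., over all measurable functions of the dataset D_N(P) with values in the probability distributions on Ω³. -/
/-!
Take `Y` constant and `X`, `Z` uniform bits that agree with probability `(1 + ε)/2`; call this
law `P_ε` (`corrBits ε`). Its conditional mutual information `I(ε) = 1 - h((1 + ε)/2)`
(`corrInfo ε`) is even in `ε`, and the dataset only sees the `(X,Y)`- and `(Y,Z)`-marginals,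
which do not depend on `ε`, so `P_ε` and `P_{-ε}` generate the same law of datasets. The average
of `P_ε` and `P_{-ε}` is uniform on the four points with `Y = 0`; by Gibbs' inequality, for
every `q`, `KL(P_ε ‖ q) + KL(P_{-ε} ‖ q) ≥ 2 I(ε)`, so for every dataset the estimate is at
divergence `≥ I(ε)` from `P_ε` or from `P_{-ε}`. One of these two events has probability
`≥ 1/2` under the common law of datasets. Finally `I` is continuous with `I(0) = 0`,
`I(1) = 1`, so some `ε < 1` has `I(ε) = s²/2 ≤ s`, which places both laws in `S(s)`.
-/

open scoped Classical BigOperators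

noncomputable section

/-- The binary alphabet Ω = {0,1}. -/
abbrev Om : Type := Bool

/-- Probability distributions on Ω³ (coordinates named (X, Y, Z)). -/
def Dist3 : Type := {p : Om × Om × Om → ℝ // (∀ w, 0 ≤ p w) ∧ ∑ w, p w = 1}

/-- KL divergence with base-2 logarithms, `+∞` in the absence of absolute continuity. -/
def klDiv2 (p q : Om × Om × Om → ℝ) : EReal :=
  if ∀ w, q w = 0 → p w = 0 then
    (((∑ w, if p w = 0 then 0 else p w * Real.logb 2 (p w / q w)) : ℝ) : EReal)
  else ⊤

/-- Conditional mutual information `I(X ; Z | Y)` (base-2 logarithms) of a joint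
distribution `p` on Ω³ with coordinates ordered as (X, Y, Z). -/
def cmiXZ_Y (p : Om × Om × Om → ℝ) : ℝ :=
  ∑ x : Om, ∑ z : Om, ∑ y : Om,
    (if p (x, y, z) = 0 then 0
     else p (x, y, z) *
       Real.logb 2 ((p (x, y, z) * (∑ x' : Om, ∑ z' : Om, p (x', y, z'))) /
         ((∑ z' : Om, p (x, y, z')) * (∑ x' : Om, p (x', y, z)))))

/-- The constrained class `S(s) = {P on Ω³ : I(X;Z|Y) ≤ s}`. -/
def Sclass (s : ℝ) : Set Dist3 := {P | cmiXZ_Y P.1 ≤ s}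

/-- (X,Y)-marginal. -/
def margXY (p : Om × Om × Om → ℝ) : Om × Om → ℝ := fun w => ∑ z : Om, p (w.1, w.2, z)

/-- (Y,Z)-marginal. -/
def margYZ (p : Om × Om × Om → ℝ) : Om × Om → ℝ := fun w => ∑ x : Om, p (x, w.1, w.2)

/-- The dataset `D_N(P)`: `N` samples from the (X,Y)-marginal together with `N`
further samples from the (Y,Z)-marginal. -/
def Dataset (N : ℕ) : Type := (Fin N → Om × Om) × (Fin N → Om × Om)

instance (N : ℕ) : Fintype (Dataset N) := by unfold Dataset; infer_instance

/-- The probability that a distribution `p` on Ω³ assigns to a realization `d` of the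
dataset `D_N(p)` (all samples independent, the first `N` drawn from the (X,Y)-marginal
and the remaining `N` from the (Y,Z)-marginal). -/
def dataProb {N : ℕ} (p : Om × Om × Om → ℝ) (d : Dataset N) : ℝ :=
  (∏ i : Fin N, margXY p (d.1 i)) * (∏ i : Fin N, margYZ p (d.2 i))

/-- The probability, under the data-generating distribution `p`, of an event `E`
depending on the dataset. -/
def dataEventProb {N : ℕ} (p : Om × Om × Om → ℝ) (E : Dataset N → Prop) : ℝ :=
  ∑ d : Dataset N, if E d then dataProb p d else 0

namespace MemoryBottleneck

open Finset

def corrBits (ε : ℝ) : Om × Om × Om → ℝ :=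
  fun w => if w.2.1 then 0 else if w.1 = w.2.2 then (1 + ε) / 4 else (1 - ε) / 4

def corrInfo (ε : ℝ) : ℝ :=
  ((1 + ε) * Real.logb 2 (1 + ε) + (1 - ε) * Real.logb 2 (1 - ε)) / 2

lemma corrBits_nonneg {ε : ℝ} (hε : |ε| ≤ 1) (w : Om × Om × Om) : 0 ≤ corrBits ε w := by
  obtain ⟨h1, h2⟩ := abs_le.mp hε
  unfold corrBits; split_ifs <;> linarith

lemma corrBits_pos {ε : ℝ} (hε : |ε| < 1) {w : Om × Om × Om} (hw : w.2.1 = false) :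
    0 < corrBits ε w := by
  obtain ⟨h1, h2⟩ := abs_lt.mp hε
  simp only [corrBits, hw, Bool.false_eq_true, if_false]
  split_ifs <;> linarith

lemma sum_corrBits (ε : ℝ) : ∑ w, corrBits ε w = 1 := by
  simp [Fintype.sum_prod_type, corrBits]; ring

def corrDist (ε : ℝ) (hε : |ε| ≤ 1) : Dist3 :=
  ⟨corrBits ε, corrBits_nonneg hε, sum_corrBits ε⟩

lemma margXY_corrBits (ε ε' : ℝ) : margXY (corrBits ε) = margXY (corrBits ε') := by
  funext ⟨x, y⟩
  cases x <;> cases y <;> simp [margXY, corrBits] <;> ring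

lemma margYZ_corrBits (ε ε' : ℝ) : margYZ (corrBits ε) = margYZ (corrBits ε') := by
  funext ⟨y, z⟩
  cases y <;> cases z <;> simp [margYZ, corrBits] <;> ring

lemma cmiXZ_Y_corrBits {ε : ℝ} (hε : |ε| < 1) : cmiXZ_Y (corrBits ε) = corrInfo ε := by
  obtain ⟨h1, h2⟩ := abs_lt.mp hε
  have ha : (1 + ε) / 4 ≠ 0 := by linarith
  have hb : (1 - ε) / 4 ≠ 0 := by linarith
  have hy : (1 + ε) / 4 + (1 - ε) / 4 = 1 / 2 := by ring
  have hy' : (1 - ε) / 4 + (1 + ε) / 4 = 1 / 2 := by ring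
  simp [cmiXZ_Y, corrInfo, corrBits, ha, hb, hy, hy']
  ring_nf

lemma continuous_corrInfo : Continuous corrInfo := by
  have h : Continuous fun x : ℝ => x * Real.logb 2 x := by
    simp only [Real.logb, mul_div_assoc']
    exact Real.continuous_mul_log.div_const _
  exact ((h.comp (continuous_const.add continuous_id)).add
    (h.comp (continuous_const.sub continuous_id))).div_const 2

lemma corrInfo_zero : corrInfo 0 = 0 := by simp [corrInfo]

lemma corrInfo_one : corrInfo 1 = 1 := by norm_num [corrInfo]

lemma corrInfo_neg (ε : ℝ) : corrInfo (-ε) = corrInfo ε := by unfold corrInfo; ring_nf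

def klSum2 (p q : Om × Om × Om → ℝ) : ℝ :=
  ∑ w, if p w = 0 then 0 else p w * Real.logb 2 (p w / q w)

lemma klDiv2_of_forall {p q : Om × Om × Om → ℝ} (h : ∀ w, q w = 0 → p w = 0) :
    klDiv2 p q = klSum2 p q := by
  rw [klDiv2, if_pos h, klSum2]

lemma klDiv2_eq_top {p q : Om × Om × Om → ℝ} {w : Om × Om × Om} (hq : q w = 0)
    (hp : p w ≠ 0) : klDiv2 p q = ⊤ :=
  if_neg fun h => hp (h w hq)

lemma sum_logb_card_mul_nonpos {ι : Type*} (s : Finset ι) {q : ι → ℝ}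
    (hq : ∀ i ∈ s, 0 < q i) (hsum : ∑ i ∈ s, q i ≤ 1) :
    ∑ i ∈ s, Real.logb 2 (#s * q i) ≤ 0 := by
  have hlog : ∑ i ∈ s, Real.log (#s * q i) ≤ ∑ i ∈ s, (#s * q i - 1) := by
    refine sum_le_sum fun i hi => Real.log_le_sub_one_of_pos ?_
    have : 0 < #s := card_pos.mpr ⟨i, hi⟩
    have := hq i hi
    positivity
  have hlin : ∑ i ∈ s, ((#s : ℝ) * q i - 1) ≤ 0 := by
    rw [sum_sub_distrib, ← mul_sum, sum_const, nsmul_one]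
    nlinarith [(#s).cast_nonneg (α := ℝ)]
  simp only [Real.logb, ← sum_div]
  exact div_nonpos_of_nonpos_of_nonneg (hlog.trans hlin) (Real.log_nonneg one_le_two)

lemma klSum2_corrBits_add_neg {ε : ℝ} (hε : |ε| < 1) {q : Om × Om × Om → ℝ}
    (hq : ∀ w, w.2.1 = false → 0 < q w) :
    klSum2 (corrBits ε) q + klSum2 (corrBits (-ε)) q =
      2 * corrInfo ε - (∑ w with w.2.1 = false, Real.logb 2 (4 * q w)) / 2 := by
  obtain ⟨h1, h2⟩ := abs_lt.mp hε
  have logb_div_eq {x y : ℝ} (hx : 0 < x) (hy : 0 < y) :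
      Real.logb 2 (x / y) = Real.logb 2 (4 * x) - Real.logb 2 (4 * y) := by
    rw [← mul_div_mul_left x y four_ne_zero, Real.logb_div (by positivity) (by positivity)]
  have ha : 0 < (1 + ε) / 4 := by linarith
  have hb : 0 < (1 - ε) / 4 := by linarith
  simp [klSum2, sum_filter, Fintype.sum_prod_type, corrBits, ha.ne', hb.ne', ← sub_eq_add_neg,
    logb_div_eq ha, logb_div_eq hb, hq, corrInfo]
  ring_nf

lemma corrInfo_le_klDiv2 {ε : ℝ} (hε : |ε| < 1) (q : Dist3) :
    (corrInfo ε : EReal) ≤ klDiv2 (corrBits ε) q.1 ∨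
      (corrInfo ε : EReal) ≤ klDiv2 (corrBits (-ε)) q.1 := by
  by_cases hq : ∀ w, w.2.1 = false → 0 < q.1 w
  · have habs (ε' : ℝ) (w : Om × Om × Om) (hw : q.1 w = 0) : corrBits ε' w = 0 := by
      cases hy : w.2.1
      · exact absurd hw (hq w hy).ne'
      · simp [corrBits, hy]
    have hsum : ∑ w with w.2.1 = false, q.1 w ≤ 1 :=
      (sum_le_univ_sum_of_nonneg q.2.1).trans q.2.2.le
    have hgibbs := sum_logb_card_mul_nonpos _ (fun w hw => hq w (mem_filter.mp hw).2) hsum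
    have hcard : #({w : Om × Om × Om | w.2.1 = false} : Finset _) = 4 := by decide
    rw [hcard, Nat.cast_ofNat] at hgibbs
    have hadd := klSum2_corrBits_add_neg hε hq
    rw [klDiv2_of_forall (habs ε), klDiv2_of_forall (habs (-ε)), EReal.coe_le_coe_iff,
      EReal.coe_le_coe_iff]
    by_contra! ⟨h, h'⟩
    linarith
  · obtain ⟨w, hw, hqw⟩ := not_forall₂.mp hq
    left
    rw [klDiv2_eq_top (le_antisymm (not_lt.mp hqw) (q.2.1 w)) (corrBits_pos hε hw).ne']
    exact le_top

variable {N : ℕ}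

lemma dataProb_congr {p p' : Om × Om × Om → ℝ} (hXY : margXY p = margXY p')
    (hYZ : margYZ p = margYZ p') (d : Dataset N) : dataProb p d = dataProb p' d := by
  rw [dataProb, dataProb, hXY, hYZ]

lemma dataProb_nonneg {p : Om × Om × Om → ℝ} (hp : ∀ w, 0 ≤ p w) (d : Dataset N) :
    0 ≤ dataProb p d :=
  mul_nonneg (prod_nonneg fun _ _ => sum_nonneg fun _ _ => hp _)
    (prod_nonneg fun _ _ => sum_nonneg fun _ _ => hp _)

lemma sum_dataProb {p : Om × Om × Om → ℝ} (hp : ∑ w, p w = 1) :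
    ∑ d : Dataset N, dataProb p d = 1 := by
  have hXY : ∑ w, margXY p w = 1 := by
    simp only [← hp, margXY, Fintype.sum_prod_type, Fintype.sum_bool]
  have hYZ : ∑ w, margYZ p w = 1 := by
    simp only [← hp, margYZ, Fintype.sum_prod_type, Fintype.sum_bool]; ring
  refine (Fintype.sum_prod_type _).trans ?_
  simp only [dataProb]
  rw [← sum_mul_sum, ← Fintype.sum_pow, ← Fintype.sum_pow, hXY, hYZ, one_pow, one_mul]

lemma dataEventProb_le_one {p : Om × Om × Om → ℝ} (hp : ∀ w, 0 ≤ p w) (hp1 : ∑ w, p w = 1)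
    (E : Dataset N → Prop) : dataEventProb p E ≤ 1 := by
  rw [dataEventProb, ← sum_dataProb (N := N) hp1]
  gcongr with d
  split_ifs
  exacts [le_rfl, dataProb_nonneg hp d]

lemma one_le_dataEventProb_add {p p' : Om × Om × Om → ℝ} (hp : ∀ w, 0 ≤ p w)
    (hp1 : ∑ w, p w = 1) (hpp' : ∀ d : Dataset N, dataProb p' d = dataProb p d)
    {E E' : Dataset N → Prop} (hE : ∀ d, E d ∨ E' d) :
    1 ≤ dataEventProb p E + dataEventProb p' E' := by
  rw [dataEventProb, dataEventProb, ← sum_add_distrib, ← sum_dataProb (N := N) hp1]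
  gcongr with d
  have := dataProb_nonneg hp d
  rw [hpp']
  rcases hE d with h | h <;> split_ifs <;> linarith

lemma half_le_csSup_of_one_le_add {S : Set ℝ} (hS : BddAbove S) {a b : ℝ} (ha : a ∈ S)
    (hb : b ∈ S) (hab : 1 ≤ a + b) : 1 / 2 ≤ sSup S := by
  have := le_csSup hS ha
  have := le_csSup hS hb
  linarith

end MemoryBottleneck

open MemoryBottleneck in
/-- **Theorem 2 of the paper (KL version).**  For every `s ∈ [0,1]`, every `N`, and
every estimator `P̂` (an arbitrary function of the dataset valued in distributions on
Ω³), the worst-case probability over `P ∈ S(s)` that `KL(P ‖ P̂(D_N(P))) ≥ s²/2` is at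
least `1/2`. -/
theorem memory_bottleneck_lower_bound_KL
    (s : ℝ) (hs : s ∈ Set.Icc (0 : ℝ) 1) (N : ℕ)
    (est : Dataset N → Dist3) :
    (1 : ℝ) / 2 ≤
      sSup {r : ℝ | ∃ P ∈ Sclass s,
        r = dataEventProb P.1
              (fun d => ((s ^ 2 / 2 : ℝ) : EReal) ≤ klDiv2 P.1 (est d).1)} := by
  obtain ⟨hs0, hs1⟩ := hs
  obtain ⟨ε, ⟨hε0, hε1⟩, hinfo⟩ : ∃ ε ∈ Set.Icc (0 : ℝ) 1, corrInfo ε = s ^ 2 / 2 :=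
    intermediate_value_Icc zero_le_one continuous_corrInfo.continuousOn
      ⟨by rw [corrInfo_zero]; positivity, by rw [corrInfo_one]; nlinarith⟩
  have hε : |ε| < 1 := by
    refine abs_lt.mpr ⟨by linarith, hε1.lt_of_ne ?_⟩
    rintro rfl
    rw [corrInfo_one] at hinfo
    nlinarith
  have hmem {ε' : ℝ} (hε' : |ε'| < 1) (hinfo' : corrInfo ε' = s ^ 2 / 2) :
      corrDist ε' hε'.le ∈ Sclass s := by
    show cmiXZ_Y (corrBits ε') ≤ s
    rw [cmiXZ_Y_corrBits hε', hinfo']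
    nlinarith
  have hε_neg : |-ε| < 1 := by rwa [abs_neg]
  refine half_le_csSup_of_one_le_add ⟨1, ?_⟩ ⟨_, hmem hε hinfo, rfl⟩
    ⟨_, hmem hε_neg (corrInfo_neg ε ▸ hinfo), rfl⟩ ?_
  · rintro r ⟨P, -, rfl⟩
    exact dataEventProb_le_one P.2.1 P.2.2 _
  · refine one_le_dataEventProb_add (corrBits_nonneg hε.le) (sum_corrBits ε)
      (dataProb_congr (margXY_corrBits _ _) (margYZ_corrBits _ _)) fun d => ?_
    simpa only [corrDist, hinfo] using corrInfo_le_klDiv2 hε (est d)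

end
end

section
/- For every ε ∈ [0, 1/2], one has 1 − 2ε − (1 − ε) log₂(2(1 − ε)) ≥ 0; equivalently, for every ε ∈ [0, 1/2), (1 − 2ε) / ( 2(1 − ε) log₂(2(1 − ε)) ) ≥ 1/2. -/
/-!
Put `x = 1 - ε ∈ [1/2, 1]`. Since `x log₂ (2x) = x + x log₂ x`, the inequality becomes
`(1 - x) log 2 ≤ -x log x`: the concave function `-x log x` lies above its chord between
`x = 1/2` and `x = 1`, where it takes the values `(log 2) / 2` and `0`.
-/

open Real

lemma one_sub_mul_log_two_le_negMulLog {x : ℝ} (h1 : 1 / 2 ≤ x) (h2 : x ≤ 1) :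
    (1 - x) * log 2 ≤ negMulLog x := by
  have hchord := concaveOn_negMulLog.2 (show (1 / 2 : ℝ) ∈ Set.Ici 0 by norm_num)
    (show (1 : ℝ) ∈ Set.Ici 0 by norm_num)
    (show (0 : ℝ) ≤ 2 - 2 * x by linarith) (show (0 : ℝ) ≤ 2 * x - 1 by linarith)
    (by ring)
  have hx : (2 - 2 * x) • (1 / 2 : ℝ) + (2 * x - 1) • (1 : ℝ) = x := by
    simp only [smul_eq_mul]; ring
  have hhalf : negMulLog (1 / 2) = log 2 / 2 := by
    simp only [negMulLog, one_div, log_inv]; ring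
  rw [hx, hhalf, negMulLog_one, smul_eq_mul, smul_eq_mul] at hchord
  linarith

lemma mul_logb_two_two_mul_le {x : ℝ} (h1 : 1 / 2 ≤ x) (h2 : x ≤ 1) :
    x * logb 2 (2 * x) ≤ 2 * x - 1 := by
  have hlog2 : 0 < log 2 := log_pos one_lt_two
  have hexpand : x * logb 2 (2 * x) = x - negMulLog x / log 2 := by
    rw [logb, log_mul two_ne_zero (by linarith), negMulLog]
    field_simp
    ring
  have hchord : 1 - x ≤ negMulLog x / log 2 :=
    (le_div_iff₀ hlog2).2 (one_sub_mul_log_two_le_negMulLog h1 h2)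
  linarith

/-- The analytic inequality behind the paper's Proposition prop:dist_bd. -/
theorem key_analytic_inequality :
    (∀ ε ∈ Set.Icc (0 : ℝ) (1 / 2),
      0 ≤ 1 - 2 * ε - (1 - ε) * Real.logb 2 (2 * (1 - ε))) ∧
    (∀ ε ∈ Set.Ico (0 : ℝ) (1 / 2),
      (1 : ℝ) / 2 ≤ (1 - 2 * ε) / (2 * (1 - ε) * Real.logb 2 (2 * (1 - ε)))) := by
  have hineq : ∀ ε ∈ Set.Icc (0 : ℝ) (1 / 2),
      0 ≤ 1 - 2 * ε - (1 - ε) * logb 2 (2 * (1 - ε)) := by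
    rintro ε ⟨h0, h1⟩
    linarith [mul_logb_two_two_mul_le (x := 1 - ε) (by linarith) (by linarith)]
  refine ⟨hineq, ?_⟩
  rintro ε ⟨h0, h1⟩
  have hlogb : 0 < logb 2 (2 * (1 - ε)) := logb_pos one_lt_two (by linarith)
  rw [le_div_iff₀ (mul_pos (by linarith) hlogb)]
  linarith [hineq ε ⟨h0, h1.le⟩]
end

section
/- For every integer i ≥ 2Δ, the index–level sets satisfy G(i − Δ) = H(i) ∪ { (i + j, t_jᴵ) : j ∈ [w − Δ] }. -/
/-!
Statement 9 (the paper's Proposition prop:h_g): under the requirements on the input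
and output noise levels of the Meta-ARVDM framework (monotonicity, 0–T boundary,
circularity, and the block structure of the input levels), for every integer
i ≥ 2Δ the index–level sets satisfy
  G(i − Δ) = H(i) ∪ { (i + j, t_jᴵ) : j ∈ [w − Δ] }.
-/

noncomputable section

/-- `S^I`: the set of starting indices of each distinct input noise level,
`S^I = { min{ j ∈ [w] : t_jᴵ = t_iᴵ } : i ∈ [w] }`. -/
def SIset (w : ℕ) (tI : ℕ → ℝ) : Set ℕ :=
  (fun i => sInf {j | j ∈ Set.Icc 1 w ∧ tI j = tI i}) '' Set.Icc 1 w

/-- The history set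
`H(i) = {(m, 0) : 1 ≤ m ≤ i} ∪ ⋃_{j ∈ S^I} {(m, t_jᴵ) : 1 ≤ m ≤ i + j − 1}`
of (frame index, noise level) pairs. -/
def Hset (w : ℕ) (tI : ℕ → ℝ) (i : ℕ) : Set (ℕ × ℝ) :=
  {p | 1 ≤ p.1 ∧ p.1 ≤ i ∧ p.2 = 0} ∪
    ⋃ j ∈ SIset w tI, {p | 1 ≤ p.1 ∧ p.1 ≤ i + j - 1 ∧ p.2 = tI j}

/-- The generated set
`G(i) = H(i) ∪ {(i + j, t_jᴵ) : j ∈ [w]} ∪ {(i + j, t_jᴼ) : j ∈ [w]}`. -/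
def Gset (w : ℕ) (tI tO : ℕ → ℝ) (i : ℕ) : Set (ℕ × ℝ) :=
  Hset w tI i ∪
    {p | ∃ j, 1 ≤ j ∧ j ≤ w ∧ p = (i + j, tI j)} ∪
    {p | ∃ j, 1 ≤ j ∧ j ≤ w ∧ p = (i + j, tO j)}

/-!
Under the block assumption `S^I` is the set of block starts `Δq + 1`, so in `H(i)` every input
level `t_jᴵ` reaches up to frame `i + blockStart Δ j - 1`. Shifting the window by `Δ` only moves
frames between the parts: an input frame `i - Δ + j` of `G(i - Δ)` is absorbed by `H(i)` since `j`
lies in the block starting at `blockStart Δ j`; the output levels `t_jᴼ` are `0` for `j ≤ Δ` and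
equal `t_{j-Δ}ᴵ` otherwise (circularity), which gives the new frontier
`{(i + j, t_jᴵ) : j ∈ [w - Δ]}`. Conversely, the frames of `H(i)` beyond `G(i - Δ)`'s history
are the last `Δ` frames of a block, still inside `[w]` because `Δ ∣ w`.
-/

/-- The first index of the length-`Δ` block `{Δq + 1, …, Δq + Δ}` containing `j ≥ 1`. -/
def blockStart (Δ j : ℕ) : ℕ := Δ * ((j - 1) / Δ) + 1

section blockStart

variable {Δ j k w : ℕ}

lemma one_le_blockStart : 1 ≤ blockStart Δ j := Nat.le_add_left _ _

lemma blockStart_le (hj : 1 ≤ j) : blockStart Δ j ≤ j := by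
  have := Nat.mul_div_le (j - 1) Δ
  unfold blockStart; omega

lemma lt_blockStart_add (hΔ : 0 < Δ) : j < blockStart Δ j + Δ := by
  have := Nat.lt_mul_div_succ (j - 1) hΔ
  unfold blockStart; rw [Nat.mul_succ] at this; omega

lemma blockStart_eq_iff (hΔ : 0 < Δ) :
    blockStart Δ j = blockStart Δ k ↔ (j - 1) / Δ = (k - 1) / Δ := by
  unfold blockStart
  exact ⟨fun h => Nat.eq_of_mul_eq_mul_left hΔ (by omega), fun h => by rw [h]⟩

lemma blockStart_blockStart (hΔ : 0 < Δ) : blockStart Δ (blockStart Δ j) = blockStart Δ j := by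
  rw [blockStart_eq_iff hΔ]
  simp [blockStart, Nat.mul_div_cancel_left _ hΔ]

lemma blockStart_eq_of_le_of_lt (hΔ : 0 < Δ) (hk₁ : blockStart Δ j ≤ k)
    (hk₂ : k < blockStart Δ j + Δ) : blockStart Δ k = blockStart Δ j := by
  rw [blockStart_eq_iff hΔ]
  unfold blockStart at hk₁ hk₂
  exact Nat.div_eq_of_lt_le (by rw [Nat.mul_comm]; omega)
    (by rw [Nat.succ_mul, Nat.mul_comm]; omega)

lemma blockStart_add_le (hΔ : 0 < Δ) (hdvd : Δ ∣ w) (hj₁ : 1 ≤ j) (hjw : j ≤ w) :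
    blockStart Δ j + Δ ≤ w + 1 := by
  obtain ⟨c, rfl⟩ := hdvd
  have hq : (j - 1) / Δ < c := (Nat.div_lt_iff_lt_mul hΔ).2 (by rw [Nat.mul_comm]; omega)
  have := Nat.mul_le_mul_left Δ hq
  unfold blockStart; rw [Nat.mul_succ] at this; omega

end blockStart

def HasLevelBlocks (w Δ : ℕ) (tI : ℕ → ℝ) : Prop :=
  ∀ j k, 1 ≤ j → j ≤ w → 1 ≤ k → k ≤ w → (tI j = tI k ↔ (j - 1) / Δ = (k - 1) / Δ)

namespace HasLevelBlocks

variable {w Δ : ℕ} {tI : ℕ → ℝ} {j k : ℕ}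

lemma eq_iff_blockStart_eq (h : HasLevelBlocks w Δ tI) (hΔ : 0 < Δ)
    (hj₁ : 1 ≤ j) (hjw : j ≤ w) (hk₁ : 1 ≤ k) (hkw : k ≤ w) :
    tI j = tI k ↔ blockStart Δ j = blockStart Δ k := by
  rw [h j k hj₁ hjw hk₁ hkw, blockStart_eq_iff hΔ]

lemma apply_blockStart (h : HasLevelBlocks w Δ tI) (hΔ : 0 < Δ) (hj₁ : 1 ≤ j) (hjw : j ≤ w) :
    tI (blockStart Δ j) = tI j := by
  rw [h.eq_iff_blockStart_eq hΔ one_le_blockStart ((blockStart_le hj₁).trans hjw) hj₁ hjw,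
    blockStart_blockStart hΔ]

lemma sInf_levelSet_eq_blockStart (h : HasLevelBlocks w Δ tI) (hΔ : 0 < Δ)
    (hj₁ : 1 ≤ j) (hjw : j ≤ w) :
    sInf {k | k ∈ Set.Icc 1 w ∧ tI k = tI j} = blockStart Δ j := by
  have hmem : blockStart Δ j ∈ {k | k ∈ Set.Icc 1 w ∧ tI k = tI j} :=
    ⟨⟨one_le_blockStart, (blockStart_le hj₁).trans hjw⟩, h.apply_blockStart hΔ hj₁ hjw⟩
  refine le_antisymm (Nat.sInf_le hmem) (le_csInf ⟨_, hmem⟩ ?_)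
  rintro k ⟨⟨hk₁, hkw⟩, hk⟩
  rw [← (h.eq_iff_blockStart_eq hΔ hk₁ hkw hj₁ hjw).1 hk]
  exact blockStart_le hk₁

lemma SIset_eq_image_blockStart (h : HasLevelBlocks w Δ tI) (hΔ : 0 < Δ) :
    SIset w tI = blockStart Δ '' Set.Icc 1 w :=
  Set.image_congr fun _ hj => h.sInf_levelSet_eq_blockStart hΔ hj.1 hj.2

lemma Hset_eq (h : HasLevelBlocks w Δ tI) (hΔ : 0 < Δ) (i : ℕ) :
    Hset w tI i = {p | 1 ≤ p.1 ∧ p.1 ≤ i ∧ p.2 = 0} ∪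
      ⋃ j ∈ Set.Icc 1 w, {p | 1 ≤ p.1 ∧ p.1 ≤ i + blockStart Δ j - 1 ∧ p.2 = tI j} := by
  rw [Hset, h.SIset_eq_image_blockStart hΔ, Set.biUnion_image]
  refine congrArg _ (Set.iUnion₂_congr fun j hj => ?_)
  rw [h.apply_blockStart hΔ hj.1 hj.2]

end HasLevelBlocks

section recursion

variable {w Δ : ℕ} {tI tO : ℕ → ℝ} {i : ℕ}

lemma Gset_sub_subset (hΔ : 0 < Δ) (hblock : HasLevelBlocks w Δ tI)
    (hbdryO : ∀ j, 1 ≤ j → j ≤ Δ → tO j = 0)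
    (hcirc : ∀ j, 1 ≤ j → j ≤ w - Δ → tI j = tO (Δ + j)) (hi : 2 * Δ ≤ i) :
    Gset w tI tO (i - Δ) ⊆
      Hset w tI i ∪ {p | ∃ j, 1 ≤ j ∧ j ≤ w - Δ ∧ p = (i + j, tI j)} := by
  rintro ⟨m, x⟩ hp
  simp only [Gset, hblock.Hset_eq hΔ, Set.mem_union, Set.mem_iUnion, Set.mem_ofPred_eq,
    Set.mem_Icc, exists_prop, Prod.mk.injEq] at hp ⊢
  rcases hp with ((⟨h₁, h₂, rfl⟩ | ⟨j, hj, h₁, h₂, rfl⟩) | ⟨j, hj₁, hjw, rfl, rfl⟩) |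
    ⟨j, hj₁, hjw, rfl, rfl⟩
  · exact Or.inl (Or.inl ⟨h₁, by omega, rfl⟩)
  · exact Or.inl (Or.inr ⟨j, hj, h₁, by omega, rfl⟩)
  · have := lt_blockStart_add (j := j) hΔ
    exact Or.inl (Or.inr ⟨j, ⟨hj₁, hjw⟩, by omega, by omega, rfl⟩)
  · rcases le_or_gt j Δ with hjΔ | hΔj
    · exact Or.inl (Or.inl ⟨by omega, by omega, hbdryO j hj₁ hjΔ⟩)
    · refine Or.inr ⟨j - Δ, by omega, by omega, by omega, ?_⟩
      rw [hcirc (j - Δ) (by omega) (by omega), Nat.add_sub_cancel' hΔj.le]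

lemma subset_Gset_sub (hΔ : 0 < Δ) (hΔw : Δ ≤ w) (hdvd : Δ ∣ w)
    (hblock : HasLevelBlocks w Δ tI) (hbdryO : ∀ j, 1 ≤ j → j ≤ Δ → tO j = 0)
    (hcirc : ∀ j, 1 ≤ j → j ≤ w - Δ → tI j = tO (Δ + j)) (hi : Δ ≤ i) :
    Hset w tI i ∪ {p | ∃ j, 1 ≤ j ∧ j ≤ w - Δ ∧ p = (i + j, tI j)} ⊆
      Gset w tI tO (i - Δ) := by
  rintro ⟨m, x⟩ hp
  simp only [Gset, hblock.Hset_eq hΔ, Set.mem_union, Set.mem_iUnion, Set.mem_ofPred_eq,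
    Set.mem_Icc, exists_prop, Prod.mk.injEq] at hp ⊢
  rcases hp with (⟨h₁, h₂, rfl⟩ | ⟨j, ⟨hj₁, hjw⟩, h₁, h₂, rfl⟩) | ⟨j, hj₁, hjw, rfl, rfl⟩
  · rcases le_or_gt m (i - Δ) with hm | hm
    · exact Or.inl (Or.inl (Or.inl ⟨h₁, hm, rfl⟩))
    · exact Or.inr ⟨m - (i - Δ), by omega, by omega, by omega,
        (hbdryO _ (by omega) (by omega)).symm⟩
  · rcases le_or_gt m (i - Δ + blockStart Δ j - 1) with hm | hm
    · exact Or.inl (Or.inl (Or.inr ⟨j, ⟨hj₁, hjw⟩, h₁, by omega, rfl⟩))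
    · -- `m` lies in the shifted copy of `j`'s block, which stays inside `[w]` because `Δ ∣ w`
      have hstart : 1 ≤ blockStart Δ j := one_le_blockStart
      have hend := blockStart_add_le hΔ hdvd hj₁ hjw
      have hk := blockStart_eq_of_le_of_lt (j := j) (k := m - (i - Δ)) hΔ (by omega) (by omega)
      refine Or.inl (Or.inr ⟨m - (i - Δ), by omega, by omega, by omega, ?_⟩)
      rw [← hblock.apply_blockStart hΔ hj₁ hjw, ← hk,
        hblock.apply_blockStart hΔ (by omega) (by omega)]
  · exact Or.inr ⟨Δ + j, by omega, by omega, by omega, hcirc j hj₁ hjw⟩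

end recursion

theorem generated_history_recursion_general
    (w Δ : ℕ) (hΔ : 0 < Δ) (hΔw : Δ ≤ w) (hdvd : Δ ∣ w)
    (tI tO : ℕ → ℝ)
    -- 0–T boundary
    (hbdryO : ∀ j, 1 ≤ j → j ≤ Δ → tO j = 0)
    -- circularity
    (hcirc : ∀ j, 1 ≤ j → j ≤ w - Δ → tI j = tO (Δ + j))
    -- each distinct input noise level occurs exactly Δ times as a consecutive block
    (hblock : ∀ j k, 1 ≤ j → j ≤ w → 1 ≤ k → k ≤ w →
      (tI j = tI k ↔ (j - 1) / Δ = (k - 1) / Δ)) :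
    ∀ i : ℕ, 2 * Δ ≤ i →
      Gset w tI tO (i - Δ) =
        Hset w tI i ∪ {p | ∃ j, 1 ≤ j ∧ j ≤ w - Δ ∧ p = (i + j, tI j)} := fun _ hi =>
  (Gset_sub_subset hΔ hblock hbdryO hcirc hi).antisymm
    (subset_Gset_sub hΔ hΔw hdvd hblock hbdryO hcirc (by omega))

/-- **Proposition prop:h_g.**  Under the Meta-ARVDM requirements on the noise levels,
for every `i ≥ 2Δ`, `G(i − Δ) = H(i) ∪ {(i + j, t_jᴵ) : j ∈ [w − Δ]}`. -/
theorem generated_history_recursion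
    (T : ℝ) (hT : 0 < T) (w Δ : ℕ) (hΔ : 0 < Δ) (hΔw : Δ ≤ w) (hdvd : Δ ∣ w)
    (tI tO : ℕ → ℝ)
    -- noise levels lie in [0, T]
    (hrange : ∀ j, 1 ≤ j → j ≤ w → tI j ∈ Set.Icc 0 T ∧ tO j ∈ Set.Icc 0 T)
    -- monotonicity
    (hmonoI : ∀ j k, 1 ≤ j → j ≤ k → k ≤ w → tI j ≤ tI k)
    (hmonoO : ∀ j k, 1 ≤ j → j ≤ k → k ≤ w → tO j ≤ tO k)
    (hIO : ∀ j, 1 ≤ j → j ≤ w → tO j < tI j)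
    -- 0–T boundary
    (hbdryI : ∀ j, w - Δ + 1 ≤ j → j ≤ w → tI j = T)
    (hbdryO : ∀ j, 1 ≤ j → j ≤ Δ → tO j = 0)
    -- circularity
    (hcirc : ∀ j, 1 ≤ j → j ≤ w - Δ → tI j = tO (Δ + j))
    -- each distinct input noise level occurs exactly Δ times as a consecutive block
    (hblock : ∀ j k, 1 ≤ j → j ≤ w → 1 ≤ k → k ≤ w →
      (tI j = tI k ↔ (j - 1) / Δ = (k - 1) / Δ)) :
    ∀ i : ℕ, 2 * Δ ≤ i →
      Gset w tI tO (i - Δ) =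
        Hset w tI i ∪ {p | ∃ j, 1 ≤ j ∧ j ≤ w - Δ ∧ p = (i + j, tI j)} :=
  generated_history_recursion_general w Δ hΔ hΔw hdvd tI tO hbdryO hcirc hblock

end
end
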